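/- If G has torsion subgroup T and both T and G/T are strongly Hopfian, then G is strongly Hopfian. -/

import Mathlib

/-- An abelian group is strongly Hopfian if for every endomorphism `φ`,
the ascending chain `ker φ ≤ ker φ² ≤ …` is eventually stationary. -/
def StronglyHopfian (G : Type*) [AddCommGroup G] : Prop :=
  ∀ φ : AddMonoid.End G, ∃ n : ℕ, ∀ m : ℕ, n ≤ m →
    AddMonoidHom.ker (φ ^ m : G →+ G) = AddMonoidHom.ker (φ ^ n : G →+ G)

/-!
Let `T` be a subgroup of `G` that every endomorphism `φ` maps into itself (the torsion subgroup
is one). If `ker φ^m ⊆ ker φ^a` for all `m` on `G/T` and `ker φ^m ⊆ ker φ^b` for all `m` on `T`,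
then `ker φ^m ⊆ ker φ^(a+b)` on `G`: if `φ^m x = 0`, then `φ^a x ∈ T`, and `φ^m` kills it,
hence so does `φ^b`.
-/

namespace AddMonoid.End

variable {G : Type*} [AddCommGroup G]

def KernelsStabilize (φ : AddMonoid.End G) : Prop :=
  ∃ n : ℕ, ∀ m : ℕ, n ≤ m →
    AddMonoidHom.ker (φ ^ m : G →+ G) = AddMonoidHom.ker (φ ^ n : G →+ G)

lemma pow_add_apply (φ : AddMonoid.End G) (a b : ℕ) (x : G) :
    (φ ^ (a + b)) x = (φ ^ a) ((φ ^ b) x) := by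
  rw [pow_add, coe_mul, Function.comp_apply]

lemma pow_apply_eq_zero_of_le {φ : AddMonoid.End G} {m n : ℕ} (hmn : m ≤ n) {x : G}
    (hx : (φ ^ m) x = 0) : (φ ^ n) x = 0 := by
  rw [← Nat.sub_add_cancel hmn, pow_add_apply, hx, map_zero]

lemma kernelsStabilize_iff {φ : AddMonoid.End G} :
    φ.KernelsStabilize ↔ ∃ n : ℕ, ∀ (m : ℕ) (x : G), (φ ^ m) x = 0 → (φ ^ n) x = 0 := by
  constructor
  · rintro ⟨n, hn⟩
    refine ⟨n, fun m x hx => ?_⟩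
    have hmax : x ∈ AddMonoidHom.ker (φ ^ max n m : G →+ G) :=
      pow_apply_eq_zero_of_le (le_max_right n m) hx
    rwa [hn _ (le_max_left n m)] at hmax
  · rintro ⟨n, hn⟩
    exact ⟨n, fun m hnm => AddSubgroup.ext fun x =>
      ⟨hn m x, pow_apply_eq_zero_of_le hnm⟩⟩

def restrict (φ : AddMonoid.End G) {H : AddSubgroup G} (hH : H ≤ H.comap φ) :
    AddMonoid.End H :=
  ((φ : G →+ G).comp H.subtype).codRestrict H fun x => hH x.2

def quotientMap (φ : AddMonoid.End G) {H : AddSubgroup G} (hH : H ≤ H.comap φ) :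
    AddMonoid.End (G ⧸ H) :=
  QuotientAddGroup.map H H φ hH

variable {φ : AddMonoid.End G} {H : AddSubgroup G} (hH : H ≤ H.comap φ)
include hH

lemma coe_restrict_pow_apply (k : ℕ) (x : H) : ((φ.restrict hH ^ k) x : G) = (φ ^ k) x := by
  rw [coe_pow, coe_pow]
  exact (Function.Semiconj.iterate_right (f := Subtype.val) (fun _ => rfl) k) x

lemma quotientMap_pow_mk (k : ℕ) (x : G) :
    (φ.quotientMap hH ^ k) (x : G ⧸ H) = ((φ ^ k) x : G ⧸ H) := by
  rw [coe_pow, coe_pow]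
  exact ((Function.Semiconj.iterate_right (f := ((↑) : G → G ⧸ H)) (fun _ => rfl) k) x).symm

theorem kernelsStabilize_of_restrict_of_quotientMap
    (hres : (φ.restrict hH).KernelsStabilize)
    (hquot : (φ.quotientMap hH).KernelsStabilize) :
    φ.KernelsStabilize := by
  obtain ⟨b, hb⟩ := kernelsStabilize_iff.mp hres
  obtain ⟨a, ha⟩ := kernelsStabilize_iff.mp hquot
  refine kernelsStabilize_iff.mpr ⟨b + a, fun m x hx => ?_⟩
  have hxH : (φ ^ a) x ∈ H := by
    rw [← QuotientAddGroup.eq_zero_iff, ← quotientMap_pow_mk hH]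
    exact ha m _ (by rw [quotientMap_pow_mk hH, hx, QuotientAddGroup.mk_zero])
  have hkill : ((φ.restrict hH) ^ m) ⟨_, hxH⟩ = 0 := Subtype.ext <| by
    rw [coe_restrict_pow_apply, ← pow_add_apply, add_comm, pow_add_apply, hx, map_zero,
      AddSubgroup.coe_zero]
  have hkill_b := congrArg Subtype.val (hb m _ hkill)
  rwa [coe_restrict_pow_apply, ← pow_add_apply] at hkill_b

end AddMonoid.End

theorem StronglyHopfian.of_le_comap_of_quotient {G : Type*} [AddCommGroup G]
    {H : AddSubgroup G} (hH : ∀ φ : AddMonoid.End G, H ≤ H.comap φ)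
    (hsub : StronglyHopfian H) (hquot : StronglyHopfian (G ⧸ H)) : StronglyHopfian G :=
  fun φ => AddMonoid.End.kernelsStabilize_of_restrict_of_quotientMap (hH φ)
    (hsub _) (hquot _)

theorem stmt9 {G : Type*} [AddCommGroup G]
    (hT : StronglyHopfian (AddCommGroup.torsion G))
    (hQ : StronglyHopfian (G ⧸ AddCommGroup.torsion G)) :
    StronglyHopfian G :=
  StronglyHopfian.of_le_comap_of_quotient (H := AddCommGroup.torsion G)
    (fun φ _ hx => (φ : G →+ G).isOfFinAddOrder hx) hT hQ
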